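/- With the notation of the conformal Lagrangian set-up for the structure G: let x : ℝ → ℝ^{4n} be a C² curve, and suppose that for every t ∈ ℝ and every w ∈ ℝ^{4n}, Φ_L^G(x(t))(ẋ(t), w) = D₁E_L^G(x(t), ẋ(t))·w, where D₁ denotes the Fréchet derivative of E_L^G in its first (position) argument with the velocity argument held fixed. Then the conformal Euler–Lagrange equations (3.5) hold along x: for every i ∈ {1,…,n} and every t ∈ ℝ, b·(d/dt)(e^{−λ(x(t))}·(∂L/∂x_i)(x(t))) + (∂L/∂x_{2n+i})(x(t)) = 0, b·(d/dt)(e^{−λ(x(t))}·(∂L/∂x_{n+i})(x(t))) − (∂L/∂x_{3n+i})(x(t)) = 0, b·(d/dt)(e^{λ(x(t))}·(∂L/∂x_{2n+i})(x(t))) + (∂L/∂x_i)(x(t)) = 0, and b·(d/dt)(e^{λ(x(t))}·(∂L/∂x_{3n+i})(x(t))) − (∂L/∂x_{n+i})(x(t)) = 0. -/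

import Mathlib

open Real

noncomputable section

/-- The partial derivative `∂f/∂x_k` of `f : ℝ^{4n} → ℝ` at `x`, in the
coordinate direction `k`. -/
def pd {n : ℕ} (f : ((Fin 4 × Fin n) → ℝ) → ℝ) (k : Fin 4 × Fin n)
    (x : (Fin 4 × Fin n) → ℝ) : ℝ :=
  fderiv ℝ f x (Pi.single k 1)

/-- The conformal 1-form `d_G L` of the structure `G`, viewed as a map
assigning to each point `x` the linear functional `w ↦ (d_G L)(x)(w)`. -/
def omegaG {n : ℕ} (b : ℝ) (L lam : ((Fin 4 × Fin n) → ℝ) → ℝ)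
    (x w : (Fin 4 × Fin n) → ℝ) : ℝ :=
  ∑ i : Fin n,
    (-(b * exp (lam x) * pd L (2, i) x * w (0, i))
     + b * exp (lam x) * pd L (3, i) x * w (1, i)
     - b * exp (-lam x) * pd L (0, i) x * w (2, i)
     + b * exp (-lam x) * pd L (1, i) x * w (3, i))

/-- The closed 2-form `Φ_L^G = -d(d_G L)`:
`Φ_L^G(x)(u, v) = (Dω_G(x)·v)(u) - (Dω_G(x)·u)(v)`. -/
def PhiG {n : ℕ} (b : ℝ) (L lam : ((Fin 4 × Fin n) → ℝ) → ℝ)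
    (x u v : (Fin 4 × Fin n) → ℝ) : ℝ :=
  fderiv ℝ (fun y => omegaG b L lam y u) x v
    - fderiv ℝ (fun y => omegaG b L lam y v) x u

/-- The conformal energy function `E_L^G` at a point `x` with velocity `X`. -/
def EG {n : ℕ} (b : ℝ) (L lam : ((Fin 4 × Fin n) → ℝ) → ℝ)
    (x X : (Fin 4 × Fin n) → ℝ) : ℝ :=
  (∑ i : Fin n,
    (-(b * X (0, i) * exp (lam x) * pd L (2, i) x)
     + b * X (1, i) * exp (lam x) * pd L (3, i) x
     - b * X (2, i) * exp (-lam x) * pd L (0, i) x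
     + b * X (3, i) * exp (-lam x) * pd L (1, i) x)) - L x

/-!
Since `E_L^G(y, X) = ω_G(y)(X) − L(y)`, the dynamical equation at `x(t)` with test vector `w`
reduces to `D(ω_G(·)(w))(x(t))·ẋ(t) = DL(x(t))·w`, i.e. `d/dt ω_G(x(t))(w) = DL(x(t))·w`.
For `w` a coordinate vector, `ω_G(·)(w)` is `±b` times one of the conformal momenta
`e^{±λ} ∂L/∂x_k`, and the four identities are the conformal Euler–Lagrange equations.
-/

variable {n : ℕ} {b : ℝ} {L lam : ((Fin 4 × Fin n) → ℝ) → ℝ}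

theorem differentiable_pd (hL : ContDiff ℝ 2 L) (k : Fin 4 × Fin n) :
    Differentiable ℝ (pd L k) :=
  fun y => ((hL.fderiv_right le_rfl).differentiable one_ne_zero y).clm_apply
    (differentiableAt_const _)

theorem differentiable_omegaG (hL : ContDiff ℝ 2 L) (hlam : ContDiff ℝ 2 lam)
    (w : (Fin 4 × Fin n) → ℝ) : Differentiable ℝ (fun y => omegaG b L lam y w) := by
  have := differentiable_pd hL
  have := hlam.differentiable two_ne_zero
  unfold omegaG
  fun_prop

theorem EG_eq_omegaG_sub (y X : (Fin 4 × Fin n) → ℝ) :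
    EG b L lam y X = omegaG b L lam y X - L y := by
  unfold EG omegaG
  congr 1
  exact Finset.sum_congr rfl fun i _ => by ring

variable (b L lam)

theorem omegaG_single_zero (i : Fin n) (y : (Fin 4 × Fin n) → ℝ) :
    omegaG b L lam y (Pi.single (0, i) 1) = -b * (exp (lam y) * pd L (2, i) y) := by
  simp [omegaG, Pi.single_apply, Prod.ext_iff, mul_assoc]

theorem omegaG_single_one (i : Fin n) (y : (Fin 4 × Fin n) → ℝ) :
    omegaG b L lam y (Pi.single (1, i) 1) = b * (exp (lam y) * pd L (3, i) y) := by
  simp [omegaG, Pi.single_apply, Prod.ext_iff, mul_assoc]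

theorem omegaG_single_two (i : Fin n) (y : (Fin 4 × Fin n) → ℝ) :
    omegaG b L lam y (Pi.single (2, i) 1) = -b * (exp (-lam y) * pd L (0, i) y) := by
  simp [omegaG, Pi.single_apply, Prod.ext_iff, mul_assoc]

theorem omegaG_single_three (i : Fin n) (y : (Fin 4 × Fin n) → ℝ) :
    omegaG b L lam y (Pi.single (3, i) 1) = b * (exp (-lam y) * pd L (1, i) y) := by
  simp [omegaG, Pi.single_apply, Prod.ext_iff, mul_assoc]

variable {b L lam}

theorem fderiv_omegaG_eq_fderiv_of_PhiG_eq {p X w : (Fin 4 × Fin n) → ℝ}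
    (hω : DifferentiableAt ℝ (fun y => omegaG b L lam y X) p) (hL : DifferentiableAt ℝ L p)
    (h : PhiG b L lam p X w = fderiv ℝ (fun y => EG b L lam y X) p w) :
    fderiv ℝ (fun y => omegaG b L lam y w) p X = fderiv ℝ L p w := by
  simp only [EG_eq_omegaG_sub, fderiv_fun_sub hω hL, PhiG, sub_apply] at h
  linarith

theorem deriv_omegaG_single_comp_eq_pd (hL : ContDiff ℝ 2 L) (hlam : ContDiff ℝ 2 lam)
    {x : ℝ → (Fin 4 × Fin n) → ℝ} (hx : Differentiable ℝ x)
    (hdyn : ∀ (t : ℝ) (w : (Fin 4 × Fin n) → ℝ),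
      PhiG b L lam (x t) (deriv x t) w
        = fderiv ℝ (fun y => EG b L lam y (deriv x t)) (x t) w)
    (k : Fin 4 × Fin n) (t : ℝ) :
    deriv (fun s => omegaG b L lam (x s) (Pi.single k 1)) t = pd L k (x t) :=
  (fderiv_comp_deriv t (differentiable_omegaG hL hlam _ _) (hx t)).trans <|
    fderiv_omegaG_eq_fderiv_of_PhiG_eq (differentiable_omegaG hL hlam _ _)
      (hL.differentiable two_ne_zero _) (hdyn t _)

end

/-- Along an integral curve of the dynamical equation `i_X Φ_L^G = dE_L^G`
(equation (1.1)), the conformal Euler–Lagrange equations (3.5) hold. -/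
theorem stmt9 (n : ℕ) (b : ℝ) (L lam : ((Fin 4 × Fin n) → ℝ) → ℝ)
    (hL : ContDiff ℝ 2 L) (hlam : ContDiff ℝ 2 lam)
    (x : ℝ → (Fin 4 × Fin n) → ℝ) (hx : ContDiff ℝ 2 x)
    (hdyn : ∀ (t : ℝ) (w : (Fin 4 × Fin n) → ℝ),
      PhiG b L lam (x t) (deriv x t) w
        = fderiv ℝ (fun y => EG b L lam y (deriv x t)) (x t) w) :
    ∀ (i : Fin n) (t : ℝ),
      b * deriv (fun s => exp (-lam (x s)) * pd L (0, i) (x s)) t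
          + pd L (2, i) (x t) = 0 ∧
      b * deriv (fun s => exp (-lam (x s)) * pd L (1, i) (x s)) t
          - pd L (3, i) (x t) = 0 ∧
      b * deriv (fun s => exp (lam (x s)) * pd L (2, i) (x s)) t
          + pd L (0, i) (x t) = 0 ∧
      b * deriv (fun s => exp (lam (x s)) * pd L (3, i) (x s)) t
          - pd L (1, i) (x t) = 0 := by
  intro i t
  have h := deriv_omegaG_single_comp_eq_pd hL hlam (hx.differentiable two_ne_zero) hdyn
  have h0 := h (0, i) t
  have h1 := h (1, i) t
  have h2 := h (2, i) t
  have h3 := h (3, i) t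
  simp only [omegaG_single_zero, omegaG_single_one, omegaG_single_two, omegaG_single_three,
    deriv_const_mul_field] at h0 h1 h2 h3
  refine ⟨?_, ?_, ?_, ?_⟩ <;> linarith
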